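/- arXiv:2108.10256 — 3 statements merged into one kernel-verified Lean document; each statement's English description precedes it below -/
import Mathlib

section
/- Let U, V ⊆ ℂ be open sets and φ : U → V a conformal isomorphism (a bijective holomorphic map). Let A ⊆ U be a closed subset of ℂ with dist(A, ℂ \ U) > 0 and η := inf_{z∈A} |φ'(z)| > 0. Then there exists ε > 0 with the following property: for every holomorphic f : U → ℂ with |f(z) − φ(z)| ≤ ε for all z ∈ U, the map f is injective on A, f(A) ⊆ V, and |f'(z)| > η/2 for all z ∈ A; moreover, if |φ'| is bounded above on A, then |f'| is bounded above on A. -/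
/-!
Write `g = f - φ` and `κ = 256 π`. The heart of the matter is a weak Koebe theorem: if `φ` is
holomorphic and injective on a disc `B(z, r)` and omits the value `w` there, then
`r ‖φ'(z)‖ ≤ κ ‖φ(z) - w‖`. It comes from Bloch's theorem applied to a logarithm `L` of `φ - w`:
injectivity of `φ` forbids two values of `L` at distance `2π`, while Bloch's theorem puts a disc
of radius `r ‖L'(z)‖ / 128` into the image of `L`.

Take `ε = η d / (8 κ)`. Cauchy's estimate on `B(z, d) ⊆ U` gives `‖g'(z)‖ ≤ 2 ε / d` on `A`,
whence both derivative bounds; Koebe on `B(z, d)` puts `f(z)` into `φ(B(z, d)) ⊆ V`. If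
`f(z₁) = f(z₂)`, then `‖φ(z₁) - φ(z₂)‖ = ‖g(z₁) - g(z₂)‖` is bounded below by Koebe and above by
Schwarz's lemma for `g` (nearby points) or by `2 ε` (distant points), and these bounds clash.
-/

open Set Filter Metric Topology Complex
open scoped Real

theorem Complex.exists_exp_eq_of_ne_zero_on_ball {q : ℂ → ℂ} {c : ℂ} {r : ℝ}
    (hq : DifferentiableOn ℂ q (ball c r)) (hq₀ : ∀ z ∈ ball c r, q z ≠ 0) :
    ∃ L : ℂ → ℂ, ∀ z ∈ ball c r, HasDerivAt L (deriv q z / q z) z ∧ exp (L z) = q z := by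
  rcases le_or_gt r 0 with hr | hr
  · exact ⟨0, fun z hz => absurd hz (by simp [ball_eq_empty.mpr hr])⟩
  have hc : c ∈ ball c r := mem_ball_self hr
  have hq' : DifferentiableOn ℂ (deriv q) (ball c r) :=
    (hq.analyticOnNhd isOpen_ball).deriv.differentiableOn
  obtain ⟨L, hLc, hL⟩ := ((hq'.div hq hq₀).isExactOn_ball).with_val_at c (log (q c))
  have hqL : ∀ z ∈ ball c r, HasDerivAt (fun z => q z * exp (-L z)) 0 z := by
    intro z hz
    have := ((hq.differentiableAt (isOpen_ball.mem_nhds hz)).hasDerivAt).mul (hL z hz).neg.cexp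
    refine this.congr_deriv ?_
    simp only [Pi.neg_apply, Pi.div_apply]
    field_simp [hq₀ z hz]
    ring
  refine ⟨L, fun z hz => ⟨hL z hz, ?_⟩⟩
  have hconst := isOpen_ball.is_const_of_deriv_eq_zero (convex_ball c r).isPreconnected
    (fun w hw => (hqL w hw).differentiableAt.differentiableWithinAt)
    (fun w hw => (hqL w hw).deriv) hz hc
  simp only [hLc, exp_neg, exp_log (hq₀ c hc), mul_inv_cancel₀ (hq₀ c hc)] at hconst
  exact ((mul_inv_eq_one₀ (exp_ne_zero _)).mp hconst).symm

theorem norm_deriv_mul_norm_sub_le {𝕜 : Type*} [RCLike 𝕜] {h : 𝕜 → 𝕜} {s : Set 𝕜} {p z : 𝕜}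
    (hs : Convex ℝ s) (hp : p ∈ s) (hz : z ∈ s) (hd : ∀ y ∈ s, DifferentiableAt 𝕜 h y)
    (hclose : ∀ y ∈ s, ‖deriv h y - deriv h p‖ ≤ ‖deriv h p‖ / 2) :
    ‖deriv h p‖ * ‖z - p‖ ≤ 2 * ‖h z - h p‖ := by
  have hlin := hs.norm_image_sub_le_of_norm_hasDerivWithin_le
    (f := fun y => h y - deriv h p * y) (f' := fun y => deriv h y - deriv h p)
    (fun y hy => (((hd y hy).hasDerivAt).sub ((hasDerivAt_id y).const_mul _)
      |>.congr_deriv (by simp)).hasDerivWithinAt) hclose hp hz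
  have hsplit : deriv h p * (z - p)
      = (h z - h p) - ((h z - deriv h p * z) - (h p - deriv h p * p)) := by ring
  have := norm_sub_le (h z - h p) ((h z - deriv h p * z) - (h p - deriv h p * p))
  rw [← hsplit, norm_mul] at this
  linarith [norm_nonneg (h z - h p)]

theorem ball_subset_image_of_norm_deriv_le {h : ℂ → ℂ} {p : ℂ} {r M : ℝ} (hr : 0 < r)
    (hd : DifferentiableOn ℂ h (ball p r)) (hM : ∀ z ∈ ball p r, ‖deriv h z‖ ≤ M)
    (hp : deriv h p ≠ 0) :
    ball (h p) (‖deriv h p‖ ^ 2 * r / (16 * M)) ⊆ h '' ball p r := by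
  set μ := ‖deriv h p‖
  have hμ : 0 < μ := norm_pos_iff.mpr hp
  have hM₀ : 0 < M := hμ.trans_le (hM p (mem_ball_self hr))
  set δ := μ * r / (4 * M) with hδdef
  have hδ : 0 < δ := by positivity
  have hδr : δ < r := by
    rw [div_lt_iff₀ (by positivity)]
    nlinarith [hM p (mem_ball_self hr)]
  have hsub : closedBall p δ ⊆ ball p r := closedBall_subset_ball hδr
  have hdAt : ∀ z ∈ ball p r, DifferentiableAt ℂ h z :=
    fun z hz => hd.differentiableAt (isOpen_ball.mem_nhds hz)
  have hclose : ∀ z ∈ closedBall p δ, ‖deriv h z - deriv h p‖ ≤ μ / 2 := by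
    intro z hz
    have hmaps : MapsTo (deriv h) (ball p r) (closedBall (deriv h p) (2 * M)) := fun y hy => by
      rw [mem_closedBall, dist_eq_norm]
      linarith [norm_sub_le (deriv h y) (deriv h p), hM y hy, hM p (mem_ball_self hr)]
    calc ‖deriv h z - deriv h p‖
        ≤ 2 * M / r * dist z p := by
          simpa [dist_eq_norm] using Complex.dist_le_div_mul_dist_of_mapsTo_ball
            (hd.analyticOnNhd isOpen_ball).deriv.differentiableOn hmaps (hsub hz)
      _ ≤ 2 * M / r * δ := by gcongr; exact mem_closedBall.mp hz
      _ = μ / 2 := by rw [hδdef]; field_simp; ring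
  have hsphere : ∀ z ∈ sphere p δ, μ * δ / 2 ≤ ‖h z - h p‖ := by
    intro z hz
    have := norm_deriv_mul_norm_sub_le (convex_closedBall p δ) (mem_closedBall_self hδ.le)
      (sphere_subset_closedBall hz) (fun y hy => hdAt y (hsub hy)) hclose
    rw [← dist_eq_norm, mem_sphere.mp hz] at this
    linarith
  have hne : ∃ᶠ z in 𝓝 p, h z ≠ h p :=
    ((hdAt p (mem_ball_self hr)).hasDerivAt.eventually_ne hp).frequently.filter_mono
      nhdsWithin_le_nhds
  have hdc : DiffContOnCl ℂ h (ball p δ) := hd.diffContOnCl_ball hsub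
  calc ball (h p) (μ ^ 2 * r / (16 * M)) = ball (h p) (μ * δ / 2 / 2) := by
        congr 1; rw [hδdef]; field_simp; ring
    _ ⊆ h '' closedBall p δ := hdc.ball_subset_image_closedBall hδ hsphere hne
    _ ⊆ h '' ball p r := image_mono hsub

theorem ContinuousOn.exists_ball_le_two_mul {X : Type*} [PseudoMetricSpace X] [ProperSpace X]
    {g : X → ℝ} {c : X} {ρ : ℝ} (hρ : 0 < ρ) (hg : ContinuousOn g (closedBall c ρ))
    (hg₀ : ∀ x ∈ closedBall c ρ, 0 ≤ g x) (hc : 0 < g c) :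
    ∃ p r, 0 < r ∧ ball p r ⊆ ball c ρ ∧ ρ * g c ≤ 2 * r * g p ∧
      ∀ z ∈ ball p r, g z ≤ 2 * g p := by
  -- Maximise `(ρ - dist x c) * g x`, which vanishes on the boundary sphere.
  obtain ⟨p, hp, hmax⟩ := (isCompact_closedBall c ρ).exists_isMaxOn
    ⟨c, mem_closedBall_self hρ.le⟩ (f := fun x => (ρ - dist x c) * g x) (by fun_prop)
  have hmax' : ∀ x ∈ closedBall c ρ, (ρ - dist x c) * g x ≤ (ρ - dist p c) * g p := hmax
  have hcp : ρ * g c ≤ (ρ - dist p c) * g p := by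
    simpa using hmax' c (mem_closedBall_self hρ.le)
  have hpc : dist p c < ρ := by
    refine (mem_closedBall.mp hp).lt_of_ne fun hρp => ?_
    rw [hρp, sub_self, zero_mul] at hcp
    nlinarith
  set r := (ρ - dist p c) / 2 with hr
  have hball : ∀ z ∈ ball p r, r ≤ ρ - dist z c := fun z hz => by
    linarith [dist_triangle z p c, mem_ball.mp hz]
  refine ⟨p, r, by linarith, fun z hz => ?_, hcp.trans_eq (by rw [hr]; ring), fun z hz => ?_⟩
  · rw [mem_ball]; linarith [hball z hz]
  · have hz' : z ∈ closedBall c ρ := by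
      rw [mem_closedBall]; linarith [hball z hz, dist_nonneg (x := p) (y := c)]
    have := hmax' z hz'
    nlinarith [hball z hz, hg₀ z hz']

theorem exists_ball_subset_image_ball {G : ℂ → ℂ} {c : ℂ} {R : ℝ}
    (hG : DifferentiableOn ℂ G (ball c R)) :
    ∃ w, ball w (R * ‖deriv G c‖ / 128) ⊆ G '' ball c R := by
  rcases le_or_gt (R * ‖deriv G c‖) 0 with hRc | hRc
  · exact ⟨G c, by simp [ball_eq_empty.mpr (by linarith : R * ‖deriv G c‖ / 128 ≤ 0)]⟩
  have hR : 0 < R := pos_of_mul_pos_left hRc (norm_nonneg _)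
  have hG' : ContinuousOn (fun z => ‖deriv G z‖) (closedBall c (R / 2)) :=
    ((hG.analyticOnNhd isOpen_ball).deriv.continuousOn.norm).mono
      (closedBall_subset_ball (by linarith))
  obtain ⟨p, r, hr, hsub, hcp, hle⟩ := hG'.exists_ball_le_two_mul (by linarith)
    (fun _ _ => norm_nonneg _) (pos_of_mul_pos_right hRc hR.le)
  have hsub' : ball p r ⊆ ball c R := hsub.trans (ball_subset_ball (by linarith))
  have hp : 0 < ‖deriv G p‖ := by nlinarith [norm_nonneg (deriv G c)]
  refine ⟨G p, (ball_subset_ball ?_).trans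
    ((ball_subset_image_of_norm_deriv_le hr (hG.mono hsub') hle (norm_pos_iff.mp hp)).trans
      (image_mono hsub'))⟩
  rw [div_le_div_iff₀ (by norm_num) (by positivity)]
  nlinarith

theorem mul_norm_deriv_le_of_injOn_ball {φ : ℂ → ℂ} {z₀ w : ℂ} {ρ : ℝ}
    (hd : DifferentiableOn ℂ φ (ball z₀ ρ)) (hinj : InjOn φ (ball z₀ ρ))
    (hw : w ∉ φ '' ball z₀ ρ) :
    ρ * ‖deriv φ z₀‖ ≤ 256 * π * ‖φ z₀ - w‖ := by
  rcases le_or_gt ρ 0 with hρ | hρ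
  · nlinarith [norm_nonneg (deriv φ z₀), norm_nonneg (φ z₀ - w), Real.pi_pos]
  have hz₀ : z₀ ∈ ball z₀ ρ := mem_ball_self hρ
  have hq₀ : ∀ z ∈ ball z₀ ρ, φ z - w ≠ 0 := fun z hz h => hw ⟨z, hz, sub_eq_zero.mp h⟩
  obtain ⟨L, hL⟩ := exists_exp_eq_of_ne_zero_on_ball (hd.sub_const w) hq₀
  -- Injectivity of `φ` means that no two values of the logarithm `L` differ by `2πi`,
  -- whereas Bloch's theorem puts a disc of radius `ρ ‖L'(z₀)‖ / 128` inside the image of `L`.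
  have hsmall : ρ * ‖deriv L z₀‖ / 128 ≤ 2 * π := by
    obtain ⟨v, hv⟩ := exists_ball_subset_image_ball
      (fun z hz => (hL z hz).1.differentiableAt.differentiableWithinAt)
    by_contra! hbig
    obtain ⟨a, ha, hLa⟩ := hv (mem_ball_self (by linarith [Real.pi_pos]))
    obtain ⟨b, hb, hLb⟩ := hv (show v + 2 * π * I ∈ _ by
      simpa [abs_of_pos Real.pi_pos] using hbig)
    have hab : φ b = φ a := by
      rw [← sub_left_inj (a := w), ← (hL b hb).2, ← (hL a ha).2, hLa, hLb,
        exp_add, exp_two_pi_mul_I, mul_one]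
    rw [hinj hb ha hab, hLa] at hLb
    simp [Real.pi_ne_zero, I_ne_zero] at hLb
  have hq : 0 < ‖φ z₀ - w‖ := norm_pos_iff.mpr (hq₀ z₀ hz₀)
  rw [(hL z₀ hz₀).1.deriv, deriv_sub_const, norm_div] at hsmall
  rw [div_le_iff₀ (by norm_num), mul_div_assoc', div_le_iff₀ hq] at hsmall
  linarith

section Perturbation

variable {U V A : Set ℂ} {φ f : ℂ → ℂ} {d η ε : ℝ}

theorem mapsTo_closedBall_of_norm_sub_le (hε : ∀ x ∈ U, ‖f x - φ x‖ ≤ ε) {z : ℂ} (hz : z ∈ U) :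
    MapsTo (fun x => f x - φ x) U (closedBall (f z - φ z) (2 * ε)) := fun x hx => by
  rw [mem_closedBall, dist_eq_norm]
  linarith [norm_sub_le (f x - φ x) (f z - φ z), hε x hx, hε z hz]

theorem norm_deriv_sub_le_of_norm_sub_le (hf : DifferentiableOn ℂ f U)
    (hφ : DifferentiableOn ℂ φ U) (hε : ∀ x ∈ U, ‖f x - φ x‖ ≤ ε) (hd : 0 < d) {z : ℂ}
    (hz : ball z d ⊆ U) :
    ‖deriv f z - deriv φ z‖ ≤ 2 * ε / d := by
  have hU : U ∈ 𝓝 z := mem_of_superset (ball_mem_nhds z hd) hz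
  rw [← deriv_sub (hf.differentiableAt hU) (hφ.differentiableAt hU)]
  exact Complex.norm_deriv_le_div_of_mapsTo_ball ((hf.sub hφ).mono hz)
    ((mapsTo_closedBall_of_norm_sub_le hε (hz (mem_ball_self hd))).mono_left hz) hd

theorem mul_norm_deriv_le_of_injOn (hφ : DifferentiableOn ℂ φ U) (hinj : InjOn φ U)
    {z w : ℂ} {r : ℝ} (hz : ball z r ⊆ U) (hw : w ∈ U) (hr : r ≤ dist w z) :
    r * ‖deriv φ z‖ ≤ 256 * π * ‖φ z - φ w‖ := by
  refine mul_norm_deriv_le_of_injOn_ball (hφ.mono hz) (hinj.mono hz) ?_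
  rintro ⟨x, hx, hxw⟩
  rw [hinj (hz hx) hw hxw] at hx
  exact (mem_ball.mp hx).not_ge hr

theorem injOn_of_norm_sub_le (hf : DifferentiableOn ℂ f U) (hφ : DifferentiableOn ℂ φ U)
    (hinj : InjOn φ U) (hball : ∀ a ∈ A, ball a d ⊆ U) (hd : 0 < d) (hη : 0 < η)
    (hηle : ∀ z ∈ A, η ≤ ‖deriv φ z‖) (hε : ∀ x ∈ U, ‖f x - φ x‖ ≤ ε)
    (hεη : 2048 * π * ε ≤ η * d) :
    InjOn f A := by
  intro z₁ h₁ z₂ h₂ hf₁₂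
  by_contra hne
  have hU₁ : z₁ ∈ U := hball z₁ h₁ (mem_ball_self hd)
  have ht : 0 < dist z₁ z₂ := dist_pos.mpr hne
  have hφg : ‖φ z₂ - φ z₁‖ = ‖(f z₁ - φ z₁) - (f z₂ - φ z₂)‖ := by
    rw [hf₁₂]; congr 1; ring
  rcases lt_or_ge (dist z₁ z₂) (d / 2) with hnear | hfar
  · have hsub : ball z₂ (d / 2) ⊆ U := (ball_subset_ball (by linarith)).trans (hball z₂ h₂)
    have hschwarz := Complex.dist_le_div_mul_dist_of_mapsTo_ball ((hf.sub hφ).mono hsub)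
      ((mapsTo_closedBall_of_norm_sub_le hε (hball z₂ h₂ (mem_ball_self hd))).mono_left hsub)
      (mem_ball.mpr hnear)
    have hkoebe := mul_norm_deriv_le_of_injOn hφ hinj
      ((ball_subset_ball hnear.le).trans hsub) hU₁ le_rfl
    rw [hφg, ← dist_eq_norm] at hkoebe
    have hsmall : 256 * π * (2 * ε / (d / 2) * dist z₁ z₂) ≤ η * dist z₁ z₂ / 2 := by
      rw [show 256 * π * (2 * ε / (d / 2) * dist z₁ z₂) = 1024 * π * ε * dist z₁ z₂ / d by
        field_simp; ring, div_le_iff₀ hd]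
      nlinarith
    simp only [Pi.sub_apply] at hschwarz
    nlinarith [mul_le_mul_of_nonneg_left (hηle z₂ h₂) ht.le,
      mul_le_mul_of_nonneg_left hschwarz (by positivity : (0 : ℝ) ≤ 256 * π)]
  · have hkoebe := mul_norm_deriv_le_of_injOn hφ hinj
      ((ball_subset_ball (by linarith)).trans (hball z₂ h₂)) hU₁ hfar
    rw [hφg] at hkoebe
    have := norm_sub_le (f z₁ - φ z₁) (f z₂ - φ z₂)
    nlinarith [hηle z₂ h₂, hε z₁ hU₁, hε z₂ (hball z₂ h₂ (mem_ball_self hd)), Real.pi_pos]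

theorem image_subset_of_norm_sub_le (hφ : DifferentiableOn ℂ φ U) (hinj : InjOn φ U)
    (hmaps : MapsTo φ U V) (hball : ∀ a ∈ A, ball a d ⊆ U) (hd : 0 < d) (hη : 0 < η)
    (hηle : ∀ z ∈ A, η ≤ ‖deriv φ z‖) (hε : ∀ x ∈ U, ‖f x - φ x‖ ≤ ε)
    (hεη : 2048 * π * ε ≤ η * d) :
    f '' A ⊆ V := by
  rintro _ ⟨z, hz, rfl⟩
  by_contra hfz
  have hkoebe := mul_norm_deriv_le_of_injOn_ball (hφ.mono (hball z hz)) (hinj.mono (hball z hz))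
    (w := f z) fun ⟨x, hx, hxf⟩ => hfz (hxf ▸ hmaps (hball z hz hx))
  rw [norm_sub_rev] at hkoebe
  nlinarith [hηle z hz, hε z (hball z hz (mem_ball_self hd)), Real.pi_pos]

end Perturbation

theorem stmt9_general (U V : Set ℂ)
    (φ : ℂ → ℂ) (hφ : DifferentiableOn ℂ φ U) (hbij : Set.BijOn φ U V)
    (A : Set ℂ)
    (d : ℝ) (hd : 0 < d) (hdist : ∀ a ∈ A, ∀ w ∉ U, d ≤ dist a w)
    (η : ℝ) (hη : 0 < η) (hηle : ∀ z ∈ A, η ≤ ‖deriv φ z‖) :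
    ∃ ε > 0, ∀ f : ℂ → ℂ, DifferentiableOn ℂ f U →
      (∀ z ∈ U, ‖f z - φ z‖ ≤ ε) →
      Set.InjOn f A ∧ f '' A ⊆ V ∧
      (∀ z ∈ A, η / 2 < ‖deriv f z‖) ∧
      (∀ M : ℝ, (∀ z ∈ A, ‖deriv φ z‖ ≤ M) →
        ∃ M' : ℝ, ∀ z ∈ A, ‖deriv f z‖ ≤ M') := by
  have hball : ∀ a ∈ A, ball a d ⊆ U := fun a ha w hw =>
    by_contra fun hwU => (hdist a ha w hwU).not_gt (by rwa [dist_comm, ← mem_ball])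
  refine ⟨η * d / (2048 * π), by positivity, fun f hf hε => ?_⟩
  have hεη : 2048 * π * (η * d / (2048 * π)) ≤ η * d := (mul_div_cancel₀ _ (by positivity)).le
  have hderiv : ∀ z ∈ A, ‖deriv f z - deriv φ z‖ ≤ η / 4 := fun z hz =>
    (norm_deriv_sub_le_of_norm_sub_le hf hφ hε hd (hball z hz)).trans (by
      rw [div_le_iff₀ hd]; field_simp; nlinarith [Real.pi_gt_three])
  refine ⟨injOn_of_norm_sub_le hf hφ hbij.injOn hball hd hη hηle hε hεη,
    image_subset_of_norm_sub_le hφ hbij.injOn hbij.mapsTo hball hd hη hηle hε hεη,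
    fun z hz => ?_, fun M hM => ⟨M + η / 4, fun z hz => ?_⟩⟩
  · linarith [norm_sub_norm_le (deriv φ z) (deriv f z), norm_sub_rev (deriv φ z) (deriv f z),
      hηle z hz, hderiv z hz]
  · linarith [norm_sub_norm_le (deriv f z) (deriv φ z), hM z hz, hderiv z hz]

/-- **Approximation of univalent functions.** -/
theorem stmt9 (U V : Set ℂ) (hU : IsOpen U) (hV : IsOpen V)
    (φ : ℂ → ℂ) (hφ : DifferentiableOn ℂ φ U) (hbij : Set.BijOn φ U V)
    (A : Set ℂ) (hA : IsClosed A) (hAU : A ⊆ U)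
    (d : ℝ) (hd : 0 < d) (hdist : ∀ a ∈ A, ∀ w ∉ U, d ≤ dist a w)
    (η : ℝ) (hη : 0 < η) (hηle : ∀ z ∈ A, η ≤ ‖deriv φ z‖) :
    ∃ ε > 0, ∀ f : ℂ → ℂ, DifferentiableOn ℂ f U →
      (∀ z ∈ U, ‖f z - φ z‖ ≤ ε) →
      Set.InjOn f A ∧ f '' A ⊆ V ∧
      (∀ z ∈ A, η / 2 < ‖deriv f z‖) ∧
      (∀ M : ℝ, (∀ z ∈ A, ‖deriv φ z‖ ≤ M) →
        ∃ M' : ℝ, ∀ z ∈ A, ‖deriv f z‖ ≤ M') :=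
  stmt9_general U V φ hφ hbij A d hd hdist η hη hηle
end

section
/- Let U ⊆ ℂ be open and g : U → ℂ holomorphic. Suppose G ⊆ U is open and K ⊆ G is a closed subset of ℂ such that for some n ≥ 1: (a) g^n is defined and univalent on G (i.e., g^k(G) ⊆ U for all k < n and g^n is injective on G); (b) |g'| is bounded above and below by positive constants on U; and (c) dist(K, ℂ \ G) > 0. Then for every ε > 0 there exists δ > 0 with the following property: for every holomorphic f : U → ℂ with |f(z) − g(z)| ≤ δ for all z ∈ U, the iterate f^n is defined and injective on K, |f^k(z) − g^k(z)| ≤ ε for all z ∈ K and k ≤ n, and |f'| is bounded above and below by positive constants on ⋃_{k=0}^{n−1} f^k(K). -/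
/-!
A holomorphic `h` with `‖h'‖ ≤ M` on `ball z₀ R` and `μ ≤ ‖h' z₀‖` is, by the Schwarz lemma
applied to `h'`, uniformly close to its linearisation at `z₀` on a ball of radius `≈ μ R / M`:
there it is injective and its image contains a ball of radius `≈ μ² R / M`. By the chain rule this
applies to the iterates of `g`, and to those of `f` once `f'` is controlled along the orbits.

If `f` is `δ`-close to `g`, the `f`-orbits shadow the `g`-orbits with error
`δ (1 + C + ⋯ + C ^ (n - 1))`, so they stay in balls around the `g`-orbits that `g^[k]` maps
into `U`; there the Cauchy estimate gives `‖f' - g'‖ ≤ c / 2`. If `f^[n] z₁ = f^[n] z₂`, then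
`g^[n] z₂` is close to `g^[n] z₁`, so by local surjectivity and injectivity of `g^[n]` the point
`z₂` is close to `z₁`, where `f^[n]` is injective.
-/

open Set Filter Metric Topology Finset ContinuousLinearMap

section ApproximatesLinearOn

variable {𝕜 : Type*} [NontriviallyNormedField 𝕜] {h : 𝕜 → 𝕜} {a : 𝕜} {s : Set 𝕜} {c : NNReal}

theorem ApproximatesLinearOn.injOn_of_lt_norm
    (hh : ApproximatesLinearOn h (smulRight (1 : 𝕜 →L[𝕜] 𝕜) a) s c) (hc : (c : ℝ) < ‖a‖) :
    InjOn h s := by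
  intro x hx y hy hxy
  have key := hh x hx y hy
  rw [hxy, sub_self, zero_sub, norm_neg, smulRight_apply, one_apply_eq_self, smul_eq_mul,
    norm_mul] at key
  have : ‖x - y‖ = 0 := by nlinarith [norm_nonneg (x - y)]
  exact sub_eq_zero.1 (norm_eq_zero.1 this)

theorem ApproximatesLinearOn.closedBall_subset_image [CompleteSpace 𝕜]
    (hh : ApproximatesLinearOn h (smulRight (1 : 𝕜 →L[𝕜] 𝕜) a) s c) (ha : a ≠ 0)
    {b : 𝕜} {ε : ℝ} (hε0 : 0 ≤ ε) (hε : closedBall b ε ⊆ s) :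
    closedBall (h b) ((‖a‖ - c) * ε) ⊆ h '' closedBall b ε := by
  let inv : (smulRight (1 : 𝕜 →L[𝕜] 𝕜) a).NonlinearRightInverse :=
    { toFun := fun y => y * a⁻¹
      nnnorm := ‖a‖₊⁻¹
      bound' := fun y => by simp [norm_mul, mul_comm]
      right_inv' := fun y => by simp [ha] }
  have hinv : (inv.nnnorm : ℝ)⁻¹ = ‖a‖ := by simp [inv]
  simpa [hinv, SurjOn] using hh.surjOn_closedBall_of_nonlinearRightInverse inv hε0 hε

end ApproximatesLinearOn

section LocalUnivalence

variable {h : ℂ → ℂ} {z₀ : ℂ} {R μ M s : ℝ}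

theorem approximatesLinearOn_closedBall_of_norm_deriv_le
    (hh : DifferentiableOn ℂ h (ball z₀ R)) (hM : ∀ w ∈ ball z₀ R, ‖deriv h w‖ ≤ M) (hs : s < R) :
    ApproximatesLinearOn h (smulRight (1 : ℂ →L[ℂ] ℂ) (deriv h z₀)) (closedBall z₀ s)
      (2 * M * s / R).toNNReal := by
  have hsub : closedBall z₀ s ⊆ ball z₀ R := closedBall_subset_ball hs
  have hderiv : DifferentiableOn ℂ (deriv h) (ball z₀ R) :=
    (hh.analyticOnNhd isOpen_ball).deriv.differentiableOn
  have hmaps : MapsTo (deriv h) (ball z₀ R) (closedBall (deriv h z₀) (2 * M)) := by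
    intro w hw
    have hz₀ : z₀ ∈ ball z₀ R := mem_ball_self (dist_nonneg.trans_lt hw)
    rw [mem_closedBall, dist_eq_norm]
    linarith [norm_sub_le (deriv h w) (deriv h z₀), hM w hw, hM z₀ hz₀]
  refine LipschitzOnWith.approximatesLinearOn ?_
  refine (convex_closedBall z₀ s).lipschitzOnWith_of_nnnorm_deriv_le
    (fun x hx => ?_) (fun x hx => ?_)
  · exact (hh.differentiableAt (isOpen_ball.mem_nhds (hsub hx))).sub
      (smulRight 1 _).differentiableAt
  · have hdiff := hh.differentiableAt (isOpen_ball.mem_nhds (hsub hx))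
    have hlin : deriv (h - ⇑(smulRight (1 : ℂ →L[ℂ] ℂ) (deriv h z₀))) x =
        deriv h x - deriv h z₀ := by
      rw [deriv_sub hdiff (smulRight 1 _).differentiableAt, ContinuousLinearMap.deriv]
      simp
    have hs0 : 0 ≤ s := dist_nonneg.trans (mem_closedBall.1 hx)
    have hR : 0 < R := hs0.trans_lt hs
    have hM0 : 0 ≤ M := (norm_nonneg _).trans (hM z₀ (mem_ball_self hR))
    have hdist : ‖deriv h x - deriv h z₀‖ ≤ 2 * M / R * dist x z₀ := by
      rw [← dist_eq_norm]
      exact Complex.dist_le_div_mul_dist_of_mapsTo_ball hderiv hmaps (hsub hx)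
    rw [← NNReal.coe_le_coe, coe_nnnorm, hlin, Real.coe_toNNReal _ (by positivity)]
    calc ‖deriv h x - deriv h z₀‖ ≤ 2 * M / R * dist x z₀ := hdist
      _ ≤ 2 * M / R * s := by gcongr; exact mem_closedBall.1 hx
      _ = 2 * M * s / R := by ring

theorem approximatesLinearOn_closedBall_of_deriv_bounds (hR : 0 < R) (hμ : 0 < μ)
    (hh : DifferentiableOn ℂ h (ball z₀ R)) (hlow : μ ≤ ‖deriv h z₀‖)
    (hM : ∀ w ∈ ball z₀ R, ‖deriv h w‖ ≤ M) (hs : 4 * M * s ≤ μ * R) :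
    ApproximatesLinearOn h (smulRight (1 : ℂ →L[ℂ] ℂ) (deriv h z₀)) (closedBall z₀ s)
      (μ / 2).toNNReal := by
  have hμM : μ ≤ M := hlow.trans (hM z₀ (mem_ball_self hR))
  have hsR : s < R := by nlinarith
  refine (approximatesLinearOn_closedBall_of_norm_deriv_le hh hM hsR).mono_num ?_
  refine Real.toNNReal_le_toNNReal ?_
  rw [div_le_div_iff₀ hR two_pos]
  linarith

theorem injOn_closedBall_of_deriv_bounds (hR : 0 < R) (hμ : 0 < μ)
    (hh : DifferentiableOn ℂ h (ball z₀ R)) (hlow : μ ≤ ‖deriv h z₀‖)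
    (hM : ∀ w ∈ ball z₀ R, ‖deriv h w‖ ≤ M) (hs : 4 * M * s ≤ μ * R) :
    InjOn h (closedBall z₀ s) :=
  (approximatesLinearOn_closedBall_of_deriv_bounds hR hμ hh hlow hM hs).injOn_of_lt_norm
    (by rw [Real.coe_toNNReal _ (by positivity)]; linarith)

theorem closedBall_subset_image_of_deriv_bounds (hR : 0 < R) (hμ : 0 < μ)
    (hh : DifferentiableOn ℂ h (ball z₀ R)) (hlow : μ ≤ ‖deriv h z₀‖)
    (hM : ∀ w ∈ ball z₀ R, ‖deriv h w‖ ≤ M) (hs0 : 0 ≤ s) (hs : 4 * M * s ≤ μ * R) :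
    closedBall (h z₀) (μ * s / 2) ⊆ h '' closedBall z₀ s := by
  have ha : deriv h z₀ ≠ 0 := norm_pos_iff.1 (hμ.trans_le hlow)
  refine (closedBall_subset_closedBall ?_).trans
    ((approximatesLinearOn_closedBall_of_deriv_bounds hR hμ hh hlow hM hs).closedBall_subset_image
      ha hs0 subset_rfl)
  rw [Real.coe_toNNReal _ (by positivity)]
  nlinarith

end LocalUnivalence

section Iterates

variable {𝕜 : Type*} [NontriviallyNormedField 𝕜] {f : 𝕜 → 𝕜} {x : 𝕜} {k : ℕ}

theorem hasDerivAt_iterate_of_differentiableAt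
    (hf : ∀ j < k, DifferentiableAt 𝕜 f (f^[j] x)) :
    HasDerivAt f^[k] (∏ j ∈ range k, deriv f (f^[j] x)) x := by
  induction k with
  | zero => simpa using hasDerivAt_id x
  | succ k ih =>
    rw [Function.iterate_succ', prod_range_succ, mul_comm]
    exact (hf k k.lt_succ_self).hasDerivAt.comp x (ih fun j hj => hf j (hj.trans k.lt_succ_self))

theorem norm_deriv_iterate_mem_Icc {μ M : ℝ} (hμ : 0 ≤ μ)
    (hf : ∀ j < k, DifferentiableAt 𝕜 f (f^[j] x))
    (hbd : ∀ j < k, ‖deriv f (f^[j] x)‖ ∈ Icc μ M) :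
    ‖deriv f^[k] x‖ ∈ Icc (μ ^ k) (M ^ k) := by
  rw [(hasDerivAt_iterate_of_differentiableAt hf).deriv, norm_prod]
  have hbd' : ∀ j ∈ range k, ‖deriv f (f^[j] x)‖ ∈ Icc μ M :=
    fun j hj => hbd j (mem_range.1 hj)
  constructor
  · simpa using prod_le_prod (fun _ _ => hμ) fun j hj => (hbd' j hj).1
  · simpa using prod_le_prod (fun _ _ => norm_nonneg _) fun j hj => (hbd' j hj).2

end Iterates

section IterateUnivalence

variable {f : ℂ → ℂ} {w : ℂ} {k : ℕ} {r μ M s : ℝ}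

theorem injOn_closedBall_iterate (hr : 0 < r) (hμ : 0 < μ)
    (hf : ∀ z ∈ ball w r, ∀ j < k, DifferentiableAt ℂ f (f^[j] z))
    (hbd : ∀ z ∈ ball w r, ∀ j < k, ‖deriv f (f^[j] z)‖ ∈ Icc μ M)
    (hs : 4 * M ^ k * s ≤ μ ^ k * r) :
    InjOn f^[k] (closedBall w s) :=
  injOn_closedBall_of_deriv_bounds hr (pow_pos hμ k)
    (fun z hz =>
      (hasDerivAt_iterate_of_differentiableAt (hf z hz)).differentiableAt.differentiableWithinAt)
    (norm_deriv_iterate_mem_Icc hμ.le (hf w (mem_ball_self hr)) (hbd w (mem_ball_self hr))).1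
    (fun z hz => (norm_deriv_iterate_mem_Icc hμ.le (hf z hz) (hbd z hz)).2) hs

theorem closedBall_subset_image_iterate (hr : 0 < r) (hμ : 0 < μ)
    (hf : ∀ z ∈ ball w r, ∀ j < k, DifferentiableAt ℂ f (f^[j] z))
    (hbd : ∀ z ∈ ball w r, ∀ j < k, ‖deriv f (f^[j] z)‖ ∈ Icc μ M)
    (hs0 : 0 ≤ s) (hs : 4 * M ^ k * s ≤ μ ^ k * r) :
    closedBall (f^[k] w) (μ ^ k * s / 2) ⊆ f^[k] '' closedBall w s :=
  closedBall_subset_image_of_deriv_bounds hr (pow_pos hμ k)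
    (fun z hz =>
      (hasDerivAt_iterate_of_differentiableAt (hf z hz)).differentiableAt.differentiableWithinAt)
    (norm_deriv_iterate_mem_Icc hμ.le (hf w (mem_ball_self hr)) (hbd w (mem_ball_self hr))).1
    (fun z hz => (norm_deriv_iterate_mem_Icc hμ.le (hf z hz) (hbd z hz)).2) hs0 hs

end IterateUnivalence

section Shadowing

variable {X : Type*} [PseudoMetricSpace X] {f g : X → X} {U : Set X} {x : X} {n : ℕ} {δ ρ : ℝ}
  {L : NNReal}

theorem dist_iterate_le_of_lipschitzOnWith (hδ0 : 0 ≤ δ) (hfg : ∀ z ∈ U, dist (f z) (g z) ≤ δ)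
    (hU : ∀ k < n, closedBall (g^[k] x) ρ ⊆ U)
    (hg : ∀ k < n, LipschitzOnWith L g (closedBall (g^[k] x) ρ))
    (hδ : δ * ∑ j ∈ range n, (L : ℝ) ^ j ≤ ρ) :
    ∀ k ≤ n, dist (f^[k] x) (g^[k] x) ≤ δ * ∑ j ∈ range k, (L : ℝ) ^ j := by
  intro k
  induction k with
  | zero => simp
  | succ k ih =>
    intro hk
    have hkn : k < n := hk
    have hdist := ih hkn.le
    have hmem : f^[k] x ∈ closedBall (g^[k] x) ρ := by
      refine hdist.trans (hδ.trans' (mul_le_mul_of_nonneg_left ?_ hδ0))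
      exact sum_le_sum_of_subset_of_nonneg (range_subset_range.2 hkn.le)
        fun _ _ _ => by positivity
    rw [Function.iterate_succ_apply', Function.iterate_succ_apply', geom_sum_succ]
    calc dist (f (f^[k] x)) (g (g^[k] x))
        ≤ dist (f (f^[k] x)) (g (f^[k] x)) + dist (g (f^[k] x)) (g (g^[k] x)) :=
          dist_triangle _ _ _
      _ ≤ δ + L * (δ * ∑ j ∈ range k, (L : ℝ) ^ j) := by
        gcongr
        · exact hfg _ (hU k hkn hmem)
        · exact ((hg k hkn).dist_le_mul _ hmem _
            (mem_closedBall_self (dist_nonneg.trans hmem))).trans (by gcongr)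
      _ = δ * ((L * ∑ j ∈ range k, (L : ℝ) ^ j) + 1) := by ring

end Shadowing

theorem injOn_of_dist_le_of_injOn {X Y : Type*} [PseudoMetricSpace X] [PseudoMetricSpace Y]
    {F Φ : X → Y} {S K : Set X} {s ρ : ℝ} (hΦ : InjOn Φ S) (hKS : K ⊆ S)
    (hS : ∀ z ∈ K, closedBall z s ⊆ S) (hF : ∀ z ∈ K, InjOn F (closedBall z s))
    (hΦ_image : ∀ z ∈ K, closedBall (Φ z) ρ ⊆ Φ '' closedBall z s)
    (hFΦ : ∀ z ∈ K, dist (F z) (Φ z) ≤ ρ / 2) : InjOn F K := by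
  intro z₁ hz₁ z₂ hz₂ hF₁₂
  have hclose : Φ z₂ ∈ closedBall (Φ z₁) ρ := by
    rw [mem_closedBall]
    calc dist (Φ z₂) (Φ z₁) ≤ dist (F z₂) (Φ z₂) + dist (F z₁) (Φ z₁) := by
          rw [hF₁₂]; exact dist_triangle_left _ _ _
      _ ≤ ρ := by linarith [hFΦ z₁ hz₁, hFΦ z₂ hz₂]
  obtain ⟨y, hy, hΦy⟩ := hΦ_image z₁ hz₁ hclose
  obtain rfl : y = z₂ := hΦ (hS z₁ hz₁ hy) (hKS hz₂) hΦy
  exact hF z₁ hz₁ (mem_closedBall_self (dist_nonneg.trans hy)) hy hF₁₂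

section Unperturbed

variable {U : Set ℂ} {g : ℂ → ℂ} {w : ℂ} {n k : ℕ} {c C r s : ℝ}

theorem closedBall_subset_image_iterate_of_mem_Icc (hU : IsOpen U) (hg : DifferentiableOn ℂ g U)
    (hc : 0 < c) (hc1 : c ≤ 1) (hC1 : 1 ≤ C) (hderiv : ∀ z ∈ U, ‖deriv g z‖ ∈ Icc c C)
    (hr : 0 < r) (hdef : ∀ j < n, ∀ z ∈ ball w r, g^[j] z ∈ U) (hs0 : 0 ≤ s)
    (hs : 4 * C ^ n * s ≤ c ^ n * r) (hk : k ≤ n) :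
    closedBall (g^[k] w) (c ^ n * s / 2) ⊆ g^[k] '' closedBall w s := by
  have hck : c ^ n ≤ c ^ k := pow_le_pow_of_le_one hc.le hc1 hk
  have hCk : C ^ k ≤ C ^ n := pow_le_pow_right₀ hC1 hk
  refine (closedBall_subset_closedBall (by gcongr)).trans
    (closedBall_subset_image_iterate hr hc
      (fun z hz j hj => hg.differentiableAt (hU.mem_nhds (hdef j (hj.trans_le hk) z hz)))
      (fun z hz j hj => hderiv _ (hdef j (hj.trans_le hk) z hz)) hs0 ?_)
  calc 4 * C ^ k * s ≤ 4 * C ^ n * s := by gcongr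
    _ ≤ c ^ n * r := hs
    _ ≤ c ^ k * r := by gcongr

theorem closedBall_iterate_subset_of_mem_Icc (hU : IsOpen U) (hg : DifferentiableOn ℂ g U)
    (hc : 0 < c) (hc1 : c ≤ 1) (hC1 : 1 ≤ C) (hderiv : ∀ z ∈ U, ‖deriv g z‖ ∈ Icc c C)
    (hr : 0 < r) (hdef : ∀ j < n, ∀ z ∈ ball w r, g^[j] z ∈ U) (hs0 : 0 ≤ s)
    (hs : 4 * C ^ n * s ≤ c ^ n * r) (hk : k < n) :
    closedBall (g^[k] w) (c ^ n * s / 2) ⊆ U := by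
  have hsr : s < r := by
    nlinarith [pow_le_one₀ hc.le hc1 (n := n), one_le_pow₀ hC1 (n := n)]
  refine (closedBall_subset_image_iterate_of_mem_Icc hU hg hc hc1 hC1 hderiv hr hdef hs0 hs
    hk.le).trans ?_
  rintro - ⟨z, hz, rfl⟩
  exact hdef k hk z (closedBall_subset_ball hsr hz)

end Unperturbed

theorem norm_deriv_sub_le_of_dist_le {f g : ℂ → ℂ} {U : Set ℂ} {x : ℂ} {δ t : ℝ}
    (hf : DifferentiableOn ℂ f U) (hg : DifferentiableOn ℂ g U)
    (hfg : ∀ z ∈ U, dist (f z) (g z) ≤ δ) (ht : 0 < t) (hx : closedBall x t ⊆ U) :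
    ‖deriv f x - deriv g x‖ ≤ δ / t := by
  have hxU : U ∈ 𝓝 x := mem_of_superset (ball_mem_nhds x ht) (ball_subset_closedBall.trans hx)
  rw [← deriv_sub (hf.differentiableAt hxU) (hg.differentiableAt hxU)]
  exact Complex.norm_deriv_le_of_forall_mem_sphere_norm_le ht ((hf.sub hg).diffContOnCl_ball hx)
    fun z hz => by simpa [dist_eq_norm] using hfg z (hx (sphere_subset_closedBall hz))

section Perturbation

variable {U : Set ℂ} {f g : ℂ → ℂ} {x : ℂ} {n k : ℕ} {c C δ ρ : ℝ}

theorem dist_iterate_le_of_norm_deriv_le (hU : IsOpen U) (hg : DifferentiableOn ℂ g U)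
    (hC : 0 ≤ C) (hderiv : ∀ z ∈ U, ‖deriv g z‖ ≤ C) (hδ0 : 0 ≤ δ)
    (hfg : ∀ z ∈ U, dist (f z) (g z) ≤ δ) (hnhds : ∀ k < n, closedBall (g^[k] x) ρ ⊆ U)
    (hδ : δ * ∑ j ∈ range n, C ^ j ≤ ρ) (hk : k ≤ n) :
    dist (f^[k] x) (g^[k] x) ≤ δ * ∑ j ∈ range n, C ^ j := by
  have hlip : ∀ k < n, LipschitzOnWith C.toNNReal g (closedBall (g^[k] x) ρ) := fun k hk =>
    (convex_closedBall _ _).lipschitzOnWith_of_nnnorm_deriv_le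
      (fun y hy => hg.differentiableAt (hU.mem_nhds (hnhds k hk hy)))
      (fun y hy => by
        rw [← NNReal.coe_le_coe, coe_nnnorm, Real.coe_toNNReal _ hC]
        exact hderiv y (hnhds k hk hy))
  have hpartial := dist_iterate_le_of_lipschitzOnWith hδ0 hfg hnhds hlip
    (by rwa [Real.coe_toNNReal _ hC]) k hk
  rw [Real.coe_toNNReal _ hC] at hpartial
  refine hpartial.trans (mul_le_mul_of_nonneg_left ?_ hδ0)
  exact sum_le_sum_of_subset_of_nonneg (range_subset_range.2 hk) fun _ _ _ => by positivity

theorem norm_deriv_mem_Icc_along_orbit (hU : IsOpen U) (hf : DifferentiableOn ℂ f U)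
    (hg : DifferentiableOn ℂ g U) (hderiv : ∀ z ∈ U, ‖deriv g z‖ ∈ Icc c C) (hδ0 : 0 ≤ δ)
    (hfg : ∀ z ∈ U, dist (f z) (g z) ≤ δ) (hρ : 0 < ρ)
    (hnhds : ∀ k < n, closedBall (g^[k] x) ρ ⊆ U)
    (hδ : δ * ∑ j ∈ range n, C ^ j ≤ ρ / 2) (hδc : δ ≤ c * ρ / 4) (hk : k < n) :
    f^[k] x ∈ U ∧ DifferentiableAt ℂ f (f^[k] x) ∧
      ‖deriv f (f^[k] x)‖ ∈ Icc (c / 2) (C + c / 2) := by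
  have hgU : g^[k] x ∈ U := hnhds k hk (mem_closedBall_self hρ.le)
  have hC : 0 ≤ C := (norm_nonneg _).trans (hderiv _ hgU).2
  have hdist := dist_iterate_le_of_norm_deriv_le hU hg hC (fun z hz => (hderiv z hz).2) hδ0 hfg
    hnhds (hδ.trans (by linarith)) hk.le
  have hsub : closedBall (f^[k] x) (ρ / 2) ⊆ U :=
    (closedBall_subset_closedBall' (by linarith)).trans (hnhds k hk)
  have hfU : f^[k] x ∈ U := hsub (mem_closedBall_self (by positivity))
  have hclose : ‖deriv f (f^[k] x) - deriv g (f^[k] x)‖ ≤ c / 2 :=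
    (norm_deriv_sub_le_of_dist_le hf hg hfg (by positivity) hsub).trans
      (by rw [div_le_iff₀ (by positivity)]; linarith)
  obtain ⟨hlow, hup⟩ := hderiv _ hfU
  obtain ⟨hsub_low, hsub_up⟩ := abs_le.1 ((abs_norm_sub_norm_le _ _).trans hclose)
  exact ⟨hfU, hf.differentiableAt (hU.mem_nhds hfU), by linarith, by linarith⟩

end Perturbation

theorem exists_pos_le_and_mul_le {a b B : ℝ} (ha : 0 < a) (hb : 0 < b) (hB : 0 ≤ B) :
    ∃ δ > 0, δ ≤ a ∧ δ * B ≤ b := by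
  refine ⟨min a (b / (B + 1)), by positivity, min_le_left _ _, ?_⟩
  calc min a (b / (B + 1)) * B ≤ b / (B + 1) * (B + 1) := by
        gcongr
        · exact min_le_right _ _
        · linarith
    _ = b := div_mul_cancel₀ _ (by positivity)

theorem ball_subset_of_forall_le_dist {X : Type*} [PseudoMetricSpace X] {G K : Set X}
    {z w : X} {d r : ℝ} (hdist : ∀ z ∈ K, ∀ y ∉ G, d ≤ dist z y) (hz : z ∈ K)
    (hw : dist w z + r ≤ d) : ball w r ⊆ G := by
  intro y hy
  by_contra hyG
  linarith [hdist z hz y hyG, dist_triangle_left z y w, mem_ball'.1 hy]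

theorem univalent_iterate_of_dist_le {U G K : Set ℂ} {f g : ℂ → ℂ} {n : ℕ} {c C d s ρ δ : ℝ}
    (hU : IsOpen U) (hg : DifferentiableOn ℂ g U) (hKG : K ⊆ G)
    (hdef : ∀ k < n, ∀ z ∈ G, g^[k] z ∈ U) (hinj : InjOn (g^[n]) G)
    (hc : 0 < c) (hc1 : c ≤ 1) (hC1 : 1 ≤ C) (hderiv : ∀ z ∈ U, ‖deriv g z‖ ∈ Icc c C)
    (hd : 0 < d) (hdist : ∀ z ∈ K, ∀ w ∉ G, d ≤ dist z w)
    (hs0 : 0 < s) (hs : 4 * (C + c / 2) ^ n * s ≤ (c / 2) ^ n * (d / 2))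
    (hρ0 : 0 < ρ) (hρ : ρ ≤ c ^ n * s / 2)
    (hf : DifferentiableOn ℂ f U) (hfg : ∀ z ∈ U, dist (f z) (g z) ≤ δ) (hδ0 : 0 ≤ δ)
    (hδc : δ ≤ c * ρ / 4) (hδB : δ * ∑ j ∈ range n, C ^ j ≤ ρ / 4) :
    (∀ z ∈ K, ∀ j < n, f^[j] z ∈ U) ∧ InjOn (f^[n]) K ∧
      (∀ z ∈ K, ∀ k ≤ n, dist (f^[k] z) (g^[k] z) ≤ δ * ∑ j ∈ range n, C ^ j) ∧
      ∀ k < n, ∀ z ∈ K, ‖deriv f (f^[k] z)‖ ∈ Icc (c / 2) (C + c / 2) := by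
  -- `hs` makes `f^[n]` injective on `closedBall z s` for `z ∈ K`; `hsg` makes each `g^[k]` map
  -- `closedBall w s` onto a set containing `closedBall (g^[k] w) ρ`.
  have hsg : 4 * C ^ n * s ≤ c ^ n * (d / 2) :=
    calc 4 * C ^ n * s ≤ 4 * (C + c / 2) ^ n * s := by gcongr; linarith
      _ ≤ (c / 2) ^ n * (d / 2) := hs
      _ ≤ c ^ n * (d / 2) := by gcongr; linarith
  have hsd : s < d / 2 := by
    nlinarith [pow_le_one₀ hc.le hc1 (n := n), one_le_pow₀ hC1 (n := n)]
  have hball : ∀ z ∈ K, ∀ w ∈ closedBall z (d / 2), ball w (d / 2) ⊆ G := fun z hz w hw =>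
    ball_subset_of_forall_le_dist hdist hz (by linarith [mem_closedBall.1 hw])
  have hKball : ∀ z ∈ K, ball z (d / 2) ⊆ G := fun z hz =>
    hball z hz z (mem_closedBall_self (by positivity))
  have hgdef : ∀ w, ball w (d / 2) ⊆ G → ∀ j < n, ∀ z ∈ ball w (d / 2), g^[j] z ∈ U :=
    fun w hw j hj z hz => hdef j hj z (hw hz)
  have hnhds : ∀ w, ball w (d / 2) ⊆ G → ∀ k < n, closedBall (g^[k] w) ρ ⊆ U := fun w hw k hk =>
    (closedBall_subset_closedBall hρ).trans <| closedBall_iterate_subset_of_mem_Icc hU hg hc hc1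
      hC1 hderiv (half_pos hd) (hgdef w hw) hs0.le hsg hk
  have horbit : ∀ w, ball w (d / 2) ⊆ G → ∀ k ≤ n,
      dist (f^[k] w) (g^[k] w) ≤ δ * ∑ j ∈ range n, C ^ j := fun w hw k hk =>
    dist_iterate_le_of_norm_deriv_le hU hg (by linarith) (fun z hz => (hderiv z hz).2) hδ0 hfg
      (hnhds w hw) (by linarith) hk
  have hfderiv : ∀ w, ball w (d / 2) ⊆ G → ∀ k < n, f^[k] w ∈ U ∧
      DifferentiableAt ℂ f (f^[k] w) ∧ ‖deriv f (f^[k] w)‖ ∈ Icc (c / 2) (C + c / 2) :=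
    fun w hw k hk => norm_deriv_mem_Icc_along_orbit hU hf hg hderiv hδ0 hfg hρ0 (hnhds w hw)
      (by linarith) hδc hk
  refine ⟨fun z hz j hj => (hfderiv z (hKball z hz) j hj).1, ?_,
    fun z hz k hk => horbit z (hKball z hz) k hk,
    fun k hk z hz => (hfderiv z (hKball z hz) k hk).2.2⟩
  refine injOn_of_dist_le_of_injOn (s := s) (ρ := ρ) hinj hKG
    (fun z hz => (closedBall_subset_ball hsd).trans (hKball z hz)) (fun z hz => ?_)
    (fun z hz => (closedBall_subset_closedBall hρ).trans ?_)
    (fun z hz => (horbit z (hKball z hz) n le_rfl).trans (by linarith))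
  · exact injOn_closedBall_iterate (half_pos hd) (half_pos hc)
      (fun w hw j hj => (hfderiv w (hball z hz w (ball_subset_closedBall hw)) j hj).2.1)
      (fun w hw j hj => (hfderiv w (hball z hz w (ball_subset_closedBall hw)) j hj).2.2) hs
  · exact closedBall_subset_image_iterate_of_mem_Icc hU hg hc hc1 hC1 hderiv (half_pos hd)
      (hgdef z (hKball z hz)) hs0.le hsg le_rfl

theorem stmt11_general (U : Set ℂ) (hU : IsOpen U) (g : ℂ → ℂ)
    (hg : DifferentiableOn ℂ g U)
    (G : Set ℂ)
    (K : Set ℂ) (hKG : K ⊆ G)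
    (n : ℕ)
    (hdef : ∀ k < n, ∀ z ∈ G, g^[k] z ∈ U)
    (hinj : Set.InjOn (g^[n]) G)
    (c C : ℝ) (hc : 0 < c)
    (hderiv : ∀ z ∈ U, c ≤ ‖deriv g z‖ ∧ ‖deriv g z‖ ≤ C)
    (d : ℝ) (hd : 0 < d) (hdist : ∀ z ∈ K, ∀ w ∉ G, d ≤ dist z w) :
    ∀ ε > 0, ∃ δ > 0, ∀ f : ℂ → ℂ, DifferentiableOn ℂ f U →
      (∀ z ∈ U, dist (f z) (g z) ≤ δ) →
      (∀ z ∈ K, ∀ j < n, f^[j] z ∈ U) ∧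
      Set.InjOn (f^[n]) K ∧
      (∀ z ∈ K, ∀ k ≤ n, dist (f^[k] z) (g^[k] z) ≤ ε) ∧
      (∃ c' C' : ℝ, 0 < c' ∧ ∀ k < n, ∀ z ∈ K,
        c' ≤ ‖deriv f (f^[k] z)‖ ∧
        ‖deriv f (f^[k] z)‖ ≤ C') := by
  intro ε hε
  -- With `c ≤ 1 ≤ C`, the bounds `c ^ k` and `C ^ k` for `(g^[k])'` are monotone in `k`.
  obtain ⟨c, C, hc, hc1, hC1, hderiv⟩ : ∃ c C : ℝ, 0 < c ∧ c ≤ 1 ∧ 1 ≤ C ∧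
      ∀ z ∈ U, ‖deriv g z‖ ∈ Icc c C :=
    ⟨min c 1, max C 1, lt_min hc one_pos, min_le_right _ _, le_max_right _ _, fun z hz =>
      ⟨(min_le_left _ _).trans (hderiv z hz).1, (hderiv z hz).2.trans (le_max_left _ _)⟩⟩
  obtain ⟨s, hs0, hs⟩ : ∃ s : ℝ, 0 < s ∧ 4 * (C + c / 2) ^ n * s ≤ (c / 2) ^ n * (d / 2) :=
    ⟨(c / 2) ^ n * (d / 2) / (4 * (C + c / 2) ^ n), by positivity, by field_simp; rfl⟩
  have hρ0 : 0 < c ^ n * s / 2 := by positivity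
  obtain ⟨δ, hδ0, hδc, hδB⟩ := exists_pos_le_and_mul_le
    (by positivity : 0 < c * (c ^ n * s / 2) / 4)
    (lt_min hε (by positivity) : 0 < min ε (c ^ n * s / 2 / 4))
    (B := ∑ j ∈ range n, C ^ j) (by positivity)
  refine ⟨δ, hδ0, fun f hf hfg => ?_⟩
  obtain ⟨hfU, hfinj, hclose, hfderiv⟩ := univalent_iterate_of_dist_le hU hg hKG hdef hinj hc hc1
    hC1 hderiv hd hdist hs0 hs hρ0 le_rfl hf hfg hδ0.le hδc (hδB.trans (min_le_right _ _))
  exact ⟨hfU, hfinj, fun z hz k hk => (hclose z hz k hk).trans (hδB.trans (min_le_left _ _)),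
    c / 2, C + c / 2, half_pos hc, hfderiv⟩

/-- **Approximating univalent iterates.** -/
theorem stmt11 (U : Set ℂ) (hU : IsOpen U) (g : ℂ → ℂ)
    (hg : DifferentiableOn ℂ g U)
    (G : Set ℂ) (hG : IsOpen G) (hGU : G ⊆ U)
    (K : Set ℂ) (hKcl : IsClosed K) (hKG : K ⊆ G)
    (n : ℕ) (hn : 1 ≤ n)
    (hdef : ∀ k < n, ∀ z ∈ G, g^[k] z ∈ U)
    (hinj : Set.InjOn (g^[n]) G)
    (c C : ℝ) (hc : 0 < c)
    (hderiv : ∀ z ∈ U, c ≤ ‖deriv g z‖ ∧ ‖deriv g z‖ ≤ C)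
    (d : ℝ) (hd : 0 < d) (hdist : ∀ z ∈ K, ∀ w ∉ G, d ≤ dist z w) :
    ∀ ε > 0, ∃ δ > 0, ∀ f : ℂ → ℂ, DifferentiableOn ℂ f U →
      (∀ z ∈ U, dist (f z) (g z) ≤ δ) →
      (∀ z ∈ K, ∀ j < n, f^[j] z ∈ U) ∧
      Set.InjOn (f^[n]) K ∧
      (∀ z ∈ K, ∀ k ≤ n, dist (f^[k] z) (g^[k] z) ≤ ε) ∧
      (∃ c' C' : ℝ, 0 < c' ∧ ∀ k < n, ∀ z ∈ K,
        c' ≤ ‖deriv f (f^[k] z)‖ ∧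
        ‖deriv f (f^[k] z)‖ ≤ C') :=
  stmt11_general U hU g hg G K hKG n hdef hinj c C hc hderiv d hd hdist
end

section
/- Let Φ(z) = 5z, and for j ≥ 0 let S_j = {z ∈ ℂ : 5^{j+1} − 1 < 4·Im z < 5^{j+1} + 3}, T_j = S_j + 2i, and S = ⋃_{j≥0} S_j. There exists ε > 0 with the following property. Suppose f : S → ℂ is holomorphic and |f(z) − Φ(z)| ≤ ε for all z ∈ S. Then |Re f(z)| > 4|Re z| for all z ∈ S with |Re z| ≥ 1. Furthermore, for every j ≥ 1 there is a domain V_j ⊆ S_0 such that f^j maps V_j conformally (bijectively and holomorphically) onto T_j, f^k(V_j) ⊆ S_k for k = 0, …, j−1, the real part Re z is unbounded from above and from below on V_j, and |f'| is bounded above and below by positive constants on ⋃_{k=0}^{j−1} f^k(V_j). -/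
open Set Filter Metric Topology

/-- The horizontal strip S_j. -/
def Sstrip (j : ℕ) : Set ℂ :=
  {z | (5 : ℝ) ^ (j + 1) - 1 < 4 * z.im ∧ 4 * z.im < (5 : ℝ) ^ (j + 1) + 3}

/-- The horizontal strip T_j = S_j + 2i. -/
def Tstrip (j : ℕ) : Set ℂ := Set.image (fun w => w + 2 * Complex.I) (Sstrip j)

/-!
Write `f = 5 z + g` with `‖g‖ ≤ 1/100` on `S`. Cauchy's estimate on discs of radius `1/8` gives
`‖f' - 5‖ ≤ 1/4` on the strips `innerStrip k ⊆ S_k`, so there `f` approximates multiplication by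
`5`: it expands distances by a factor at least `4`, and each point `w` of `wideStrip (k + 1)`
(which contains `T_(k+1)` and `innerStrip (k + 1)`) has a preimage in `innerStrip k` within
`1/100` of `w / 5`. Pulling `T_j` back `j` times gives `V_j = branchDomain f j`: the points whose
first `j` iterates stay in the inner strips and whose `j`-th iterate lies in `T_j`. Expansion
makes `f^j` injective on `V_j` with a Lipschitz inverse, so `V_j` is a connected image of `T_j`,
and since the pullback of `w` lies within `j/100` of `w / 5^j`, the real part is unbounded on
`V_j` in both directions.
-/

section

variable {X Y : Type*}

theorem continuousAt_iterate_of_forall_lt [TopologicalSpace X] {f : X → X} {z : X} {n : ℕ}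
    (hf : ∀ i < n, ContinuousAt f (f^[i] z)) : ContinuousAt f^[n] z := by
  induction n with
  | zero => exact continuousAt_id
  | succ n ih =>
    rw [Function.iterate_succ']
    exact (hf n n.lt_succ_self).comp (ih fun i hi => hf i (hi.trans n.lt_succ_self))

theorem isOpen_setOf_iterate_mem [TopologicalSpace X] {f : X → X} {s : ℕ → Set X} {t : Set X}
    {n : ℕ} (hs : ∀ i < n, IsOpen (s i)) (ht : IsOpen t) (hf : ∀ i < n, ContinuousOn f (s i)) :
    IsOpen {z | f^[n] z ∈ t ∧ ∀ i < n, f^[i] z ∈ s i} := by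
  refine isOpen_iff_mem_nhds.2 fun z ⟨hzt, hzs⟩ => ?_
  have hcont : ∀ m ≤ n, ContinuousAt f^[m] z := fun m hm =>
    continuousAt_iterate_of_forall_lt fun i hi =>
      (hf i (by omega)).continuousAt ((hs i (by omega)).mem_nhds (hzs i (by omega)))
  have hzs' : ∀ᶠ x in 𝓝 z, ∀ i ∈ {i | i < n}, f^[i] x ∈ s i :=
    (eventually_all_finite (finite_lt_nat n)).2 fun i hi =>
      (hcont i (le_of_lt hi)).eventually_mem ((hs i hi).mem_nhds (hzs i hi))
  filter_upwards [(hcont n le_rfl).eventually_mem (ht.mem_nhds hzt), hzs'] with x hxt hxs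
  exact ⟨hxt, hxs⟩

theorem pow_mul_dist_le_dist_iterate [PseudoMetricSpace X] {f : X → X} {s : ℕ → Set X} {K : ℝ}
    (hK : 0 ≤ K) (hf : ∀ i, ∀ a ∈ s i, ∀ b ∈ s i, K * dist a b ≤ dist (f a) (f b)) {a b : X}
    {n : ℕ} (ha : ∀ i < n, f^[i] a ∈ s i) (hb : ∀ i < n, f^[i] b ∈ s i) :
    K ^ n * dist a b ≤ dist (f^[n] a) (f^[n] b) := by
  induction n with
  | zero => simp
  | succ n ih =>
    rw [Function.iterate_succ_apply', Function.iterate_succ_apply', pow_succ', mul_assoc]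
    exact (mul_le_mul_of_nonneg_left (ih (fun i hi => ha i (by omega))
      (fun i hi => hb i (by omega))) hK).trans
      (hf n _ (ha n n.lt_succ_self) _ (hb n n.lt_succ_self))

theorem Set.BijOn.continuousOn_invFunOn [PseudoMetricSpace X] [PseudoMetricSpace Y] [Nonempty X]
    {g : X → Y} {s : Set X} {t : Set Y} (h : BijOn g s t) {K : ℝ} (hK : 0 < K)
    (hg : ∀ a ∈ s, ∀ b ∈ s, K * dist a b ≤ dist (g a) (g b)) :
    ContinuousOn (Function.invFunOn g s) t := by
  refine (LipschitzOnWith.of_dist_le_mul (K := K⁻¹.toNNReal) fun w hw w' hw' => ?_).continuousOn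
  have hinv := hg _ (h.surjOn.mapsTo_invFunOn hw) _ (h.surjOn.mapsTo_invFunOn hw')
  rw [h.surjOn.rightInvOn_invFunOn hw, h.surjOn.rightInvOn_invFunOn hw'] at hinv
  rwa [Real.coe_toNNReal _ (inv_nonneg.2 hK.le), le_inv_mul_iff₀ hK]

end

theorem norm_deriv_sub_le_of_norm_sub_le_s13 {f g : ℂ → ℂ} {z : ℂ} {r ε : ℝ} (hr : 0 < r)
    (hf : DifferentiableOn ℂ f (ball z r)) (hg : Differentiable ℂ g)
    (hfg : ∀ w ∈ ball z r, ‖f w - g w‖ ≤ ε) : ‖deriv f z - deriv g z‖ ≤ 2 * ε / r := by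
  have hmaps : MapsTo (fun w => f w - g w) (ball z r) (closedBall (f z - g z) (2 * ε)) :=
    fun w hw => by
      rw [mem_closedBall, dist_eq_norm]
      linarith [norm_sub_le (f w - g w) (f z - g z), hfg w hw, hfg z (mem_ball_self hr)]
  have hfz : DifferentiableAt ℂ f z := hf.differentiableAt (isOpen_ball.mem_nhds (mem_ball_self hr))
  have := Complex.norm_deriv_le_div_of_mapsTo_ball (hf.sub hg.differentiableOn) hmaps hr
  rwa [deriv_sub hfz (hg z)] at this

theorem four_mul_abs_re_lt_abs_re {z w : ℂ} (h : ‖w - 5 * z‖ < |z.re|) :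
    4 * |z.re| < |w.re| := by
  have hre : w.re = 5 * z.re + (w - 5 * z).re := by simp
  have := (Complex.abs_re_le_norm (w - 5 * z)).trans_lt h
  rw [hre]
  cases abs_cases z.re <;> cases abs_cases (w - 5 * z).re <;>
    cases abs_cases (5 * z.re + (w - 5 * z).re) <;> linarith

section Strips

/-- Stated with `4 * z.im` so that `Sstrip j` is definitionally a `strip`. -/
def strip (a b : ℝ) : Set ℂ := {z | a < 4 * z.im ∧ 4 * z.im < b}

def innerStrip (k : ℕ) : Set ℂ := strip ((5 : ℝ) ^ (k + 1) - 1 / 2) ((5 : ℝ) ^ (k + 1) + 5 / 2)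

def wideStrip (k : ℕ) : Set ℂ := strip ((5 : ℝ) ^ (k + 1) - 1 / 2) ((5 : ℝ) ^ (k + 1) + 11)

theorem isOpen_strip (a b : ℝ) : IsOpen (strip a b) :=
  (isOpen_lt continuous_const (by fun_prop)).and (isOpen_lt (by fun_prop) continuous_const)

theorem convex_strip (a b : ℝ) : Convex ℝ (strip a b) := by
  have : strip a b = {z : ℂ | a / 4 < z.im} ∩ {z : ℂ | z.im < b / 4} := by
    ext z
    simp only [strip, mem_ofPred_eq, mem_inter_iff]
    constructor <;> rintro ⟨h₁, h₂⟩ <;> constructor <;> linarith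
  rw [this]
  exact (convex_halfSpace_im_gt _).inter (convex_halfSpace_im_lt _)

theorem isConnected_strip {a b : ℝ} (hab : a < b) : IsConnected (strip a b) := by
  refine (convex_strip a b).isConnected ⟨⟨0, (a + b) / 8⟩, ?_, ?_⟩ <;> dsimp only <;> linarith

theorem strip_subset_strip {a b a' b' : ℝ} (ha : a' ≤ a) (hb : b ≤ b') :
    strip a b ⊆ strip a' b' :=
  fun _ hz => ⟨ha.trans_lt hz.1, hz.2.trans_le hb⟩

theorem closedBall_subset_strip {a b r : ℝ} {z : ℂ} (hz : z ∈ strip (a + 4 * r) (b - 4 * r)) :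
    closedBall z r ⊆ strip a b := by
  intro w hw
  have him := (Complex.abs_im_le_norm (w - z)).trans (mem_closedBall_iff_norm.1 hw)
  rw [Complex.sub_im, abs_le] at him
  exact ⟨by linarith [hz.1], by linarith [hz.2]⟩

theorem Tstrip_eq (j : ℕ) : Tstrip j = strip ((5 : ℝ) ^ (j + 1) + 7) ((5 : ℝ) ^ (j + 1) + 11) := by
  ext z
  simp only [Tstrip, image_add_right, mem_preimage, Sstrip, strip, mem_ofPred_eq, Complex.add_im,
    Complex.neg_im, Complex.mul_im, Complex.I_re, Complex.I_im, Complex.re_ofNat,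
    Complex.im_ofNat, mul_one, mul_zero, add_zero]
  constructor <;> rintro ⟨h₁, h₂⟩ <;> constructor <;> linarith

theorem innerStrip_subset_Sstrip (k : ℕ) : innerStrip k ⊆ Sstrip k :=
  strip_subset_strip (by linarith) (by linarith)

theorem innerStrip_subset_wideStrip (k : ℕ) : innerStrip k ⊆ wideStrip k :=
  strip_subset_strip le_rfl (by linarith)

theorem Tstrip_subset_wideStrip (k : ℕ) : Tstrip k ⊆ wideStrip k := by
  rw [Tstrip_eq]
  exact strip_subset_strip (by linarith) le_rfl

theorem ball_subset_Sstrip {k : ℕ} {z : ℂ} (hz : z ∈ innerStrip k) : ball z (1 / 8) ⊆ Sstrip k :=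
  ball_subset_closedBall.trans <| closedBall_subset_strip ⟨by linarith [hz.1], by linarith [hz.2]⟩

theorem closedBall_div_five_subset_innerStrip {k : ℕ} {w : ℂ} (hw : w ∈ wideStrip (k + 1)) :
    closedBall (w / 5) (1 / 100) ⊆ innerStrip k := by
  obtain ⟨h₁, h₂⟩ := hw
  have hpow : (5 : ℝ) ^ (k + 1 + 1) = 5 * 5 ^ (k + 1) := pow_succ' _ _
  refine closedBall_subset_strip ⟨?_, ?_⟩ <;> rw [Complex.div_ofNat_im] <;> linarith

end Strips

def mulRightInverse {𝕜 : Type*} [NontriviallyNormedField 𝕜] {c : 𝕜} (hc : c ≠ 0) :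
    (ContinuousLinearMap.mul 𝕜 𝕜 c).NonlinearRightInverse where
  toFun y := c⁻¹ * y
  nnnorm := ‖c⁻¹‖₊
  bound' y := by rw [coe_nnnorm]; exact norm_mul_le _ _
  right_inv' y := by simp [hc]

def branchDomain (f : ℂ → ℂ) (j : ℕ) : Set ℂ :=
  {z | f^[j] z ∈ Tstrip j ∧ ∀ i < j, f^[i] z ∈ innerStrip i}

structure NearMulFive (f : ℂ → ℂ) : Prop where
  differentiableOn : DifferentiableOn ℂ f (⋃ j, Sstrip j)
  norm_sub_five_mul_le : ∀ z ∈ ⋃ j, Sstrip j, ‖f z - 5 * z‖ ≤ 1 / 100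

namespace NearMulFive

variable {f : ℂ → ℂ} (hf : NearMulFive f)
include hf

theorem norm_deriv_sub_five_le {k : ℕ} {z : ℂ} (hz : z ∈ innerStrip k) :
    ‖deriv f z - 5‖ ≤ 1 / 4 := by
  have hball : ball z (1 / 8) ⊆ ⋃ j, Sstrip j := (ball_subset_Sstrip hz).trans (subset_iUnion _ k)
  have := norm_deriv_sub_le_of_norm_sub_le_s13 (g := fun w => 5 * w) (by norm_num)
    (hf.differentiableOn.mono hball) (by fun_prop) fun w hw => hf.norm_sub_five_mul_le w (hball hw)
  rw [show deriv (fun w : ℂ => 5 * w) z = 5 by simp] at this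
  linarith

theorem differentiableAt {k : ℕ} {z : ℂ} (hz : z ∈ innerStrip k) : DifferentiableAt ℂ f z :=
  hf.differentiableOn.differentiableAt <|
    (isOpen_iUnion fun _ => isOpen_strip _ _).mem_nhds
      (mem_iUnion.2 ⟨k, innerStrip_subset_Sstrip k hz⟩)

theorem approximatesLinearOn (k : ℕ) :
    ApproximatesLinearOn f (ContinuousLinearMap.mul ℂ ℂ 5) (innerStrip k) (1 / 4) := by
  intro a ha b hb
  have := (convex_strip _ _).norm_image_sub_le_of_norm_deriv_le (f := fun z => f z - 5 * z)
    (fun x hx => (hf.differentiableAt hx).sub (by fun_prop))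
    (fun x hx => by
      rw [deriv_fun_sub (hf.differentiableAt hx) (by fun_prop)]
      simpa using hf.norm_deriv_sub_five_le hx) hb ha
  rw [ContinuousLinearMap.mul_apply']
  convert this using 2
  · ring
  · norm_num

theorem norm_deriv_mem_Icc {k : ℕ} {z : ℂ} (hz : z ∈ innerStrip k) :
    ‖deriv f z‖ ∈ Icc 4 6 := by
  have h := hf.norm_deriv_sub_five_le hz
  have h' := abs_le.1 ((abs_norm_sub_norm_le (deriv f z) 5).trans h)
  norm_num at h'
  exact ⟨by linarith [h'.1], by linarith [h'.2]⟩

theorem four_mul_dist_le {k : ℕ} {a b : ℂ} (ha : a ∈ innerStrip k) (hb : b ∈ innerStrip k) :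
    4 * dist a b ≤ dist (f a) (f b) := by
  have happrox := hf.approximatesLinearOn k a ha b hb
  rw [ContinuousLinearMap.mul_apply'] at happrox
  norm_num at happrox
  rw [dist_eq_norm, dist_eq_norm]
  have h5 : ‖(5 : ℂ) * (a - b)‖ = 5 * ‖a - b‖ := by rw [norm_mul]; norm_num
  have htri : ‖(5 : ℂ) * (a - b)‖ ≤ ‖f a - f b‖ + ‖f a - f b - 5 * (a - b)‖ := by
    simpa using norm_sub_le (f a - f b) (f a - f b - 5 * (a - b))
  linarith [norm_nonneg (a - b)]

theorem exists_preimage {k : ℕ} {w : ℂ} (hw : w ∈ wideStrip (k + 1)) :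
    ∃ z ∈ innerStrip k, f z = w ∧ ‖z - w / 5‖ ≤ 1 / 100 := by
  have hball := closedBall_div_five_subset_innerStrip hw
  have hcenter : w / 5 ∈ ⋃ j, Sstrip j :=
    mem_iUnion.2 ⟨k, innerStrip_subset_Sstrip k (hball (mem_closedBall_self (by norm_num)))⟩
  have hw' : w ∈ closedBall (f (w / 5))
      ((((mulRightInverse (show (5 : ℂ) ≠ 0 by norm_num)).nnnorm : ℝ)⁻¹ - ((1 / 4 : NNReal) : ℝ))
        * (1 / 100)) := by
    have := hf.norm_sub_five_mul_le _ hcenter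
    rw [mul_div_cancel₀ _ (by norm_num)] at this
    rw [mem_closedBall, dist_comm, dist_eq_norm]
    simp only [mulRightInverse]
    norm_num
    linarith
  obtain ⟨z, hz, hfz⟩ := (hf.approximatesLinearOn k).surjOn_closedBall_of_nonlinearRightInverse
    _ (by norm_num) hball hw'
  exact ⟨z, hball hz, hfz, mem_closedBall_iff_norm.1 hz⟩

theorem exists_iterate_preimage {n : ℕ} {w : ℂ} (hw : w ∈ wideStrip n) :
    ∃ z, f^[n] z = w ∧ (∀ i < n, f^[i] z ∈ innerStrip i) ∧ ‖z - w / 5 ^ n‖ ≤ n / 100 := by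
  induction n generalizing w with
  | zero => exact ⟨w, rfl, fun i hi => absurd hi (Nat.not_lt_zero i), by simp⟩
  | succ n ih =>
    obtain ⟨u, hu, rfl, hu5⟩ := hf.exists_preimage hw
    obtain ⟨z, rfl, hz, hzu⟩ := ih (innerStrip_subset_wideStrip n hu)
    refine ⟨z, Function.iterate_succ_apply' f n z, fun i hi => ?_, ?_⟩
    · rcases Nat.lt_succ_iff_lt_or_eq.1 hi with hi | rfl
      exacts [hz i hi, hu]
    have hpow : (1 : ℝ) ≤ ‖(5 : ℂ) ^ n‖ := by
      rw [norm_pow]; norm_num; exact one_le_pow₀ (by norm_num)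
    calc ‖z - f (f^[n] z) / 5 ^ (n + 1)‖
        = ‖(z - f^[n] z / 5 ^ n) + (f^[n] z - f (f^[n] z) / 5) / 5 ^ n‖ := by ring_nf
      _ ≤ ‖z - f^[n] z / 5 ^ n‖ + ‖f^[n] z - f (f^[n] z) / 5‖ := by
        refine (norm_add_le _ _).trans (add_le_add le_rfl ?_)
        rw [norm_div]
        exact div_le_self (norm_nonneg _) hpow
      _ ≤ (n + 1 : ℕ) / 100 := by push_cast; linarith

theorem pow_four_mul_dist_le {j : ℕ} {a b : ℂ} (ha : a ∈ branchDomain f j)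
    (hb : b ∈ branchDomain f j) : 4 ^ j * dist a b ≤ dist (f^[j] a) (f^[j] b) :=
  pow_mul_dist_le_dist_iterate (by norm_num) (fun _ _ ha _ hb => hf.four_mul_dist_le ha hb)
    ha.2 hb.2

theorem isOpen_branchDomain (j : ℕ) : IsOpen (branchDomain f j) :=
  isOpen_setOf_iterate_mem (fun _ _ => isOpen_strip _ _) (Tstrip_eq j ▸ isOpen_strip _ _)
    fun _ _ _ hz => (hf.differentiableAt hz).continuousAt.continuousWithinAt

theorem bijOn_branchDomain (j : ℕ) : BijOn f^[j] (branchDomain f j) (Tstrip j) := by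
  refine ⟨fun z hz => hz.1, fun a ha b hb hab => ?_, fun w hw => ?_⟩
  · have := hf.pow_four_mul_dist_le ha hb
    rw [hab, dist_self] at this
    exact dist_le_zero.1 (nonpos_of_mul_nonpos_right this (by positivity))
  · obtain ⟨z, hzw, hz, -⟩ := hf.exists_iterate_preimage (Tstrip_subset_wideStrip j hw)
    exact ⟨z, ⟨hzw ▸ hw, hz⟩, hzw⟩

theorem isConnected_branchDomain (j : ℕ) : IsConnected (branchDomain f j) := by
  have hbij := hf.bijOn_branchDomain j
  rw [← (hbij.symm hbij.invOn_invFunOn.symm).image_eq]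
  refine (Tstrip_eq j ▸ isConnected_strip (by linarith)).image _ ?_
  exact hbij.continuousOn_invFunOn (by positivity) fun a ha b hb => hf.pow_four_mul_dist_le ha hb

theorem exists_mem_branchDomain_abs_re_sub_le (j : ℕ) (x : ℝ) :
    ∃ z ∈ branchDomain f j, |z.re - x| ≤ j / 100 := by
  set w : ℂ := ⟨5 ^ j * x, (5 ^ (j + 1) + 9) / 4⟩
  have hw : w ∈ Tstrip j := by
    rw [Tstrip_eq]
    constructor <;> dsimp [w] <;> linarith
  obtain ⟨z, hzw, hz, hzn⟩ := hf.exists_iterate_preimage (Tstrip_subset_wideStrip j hw)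
  refine ⟨z, ⟨hzw ▸ hw, hz⟩, ?_⟩
  have hre : (w / 5 ^ j).re = x := by
    rw [show (5 : ℂ) ^ j = ((5 ^ j : ℝ) : ℂ) by push_cast; rfl, Complex.div_ofReal_re]
    field_simp
    rfl
  calc |z.re - x| = |(z - w / 5 ^ j).re| := by rw [Complex.sub_re, hre]
    _ ≤ ‖z - w / 5 ^ j‖ := Complex.abs_re_le_norm _
    _ ≤ j / 100 := hzn

end NearMulFive

/-- **The scaffolding lemma.** -/
theorem stmt13 :
    ∃ ε > 0, ∀ f : ℂ → ℂ,
      DifferentiableOn ℂ f (⋃ j, Sstrip j) →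
      (∀ z ∈ ⋃ j, Sstrip j, ‖f z - 5 * z‖ ≤ ε) →
      (∀ z ∈ ⋃ j, Sstrip j, 1 ≤ |z.re| → 4 * |z.re| < |(f z).re|) ∧
      (∀ j : ℕ, 1 ≤ j → ∃ V : Set ℂ, V ⊆ Sstrip 0 ∧ IsOpen V ∧ IsConnected V ∧
        Set.BijOn (f^[j]) V (Tstrip j) ∧
        (∀ k < j, f^[k] '' V ⊆ Sstrip k) ∧
        (∀ M : ℝ, ∃ z ∈ V, M < z.re) ∧
        (∀ M : ℝ, ∃ z ∈ V, z.re < M) ∧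
        (∃ c C : ℝ, 0 < c ∧ ∀ k < j, ∀ z ∈ V,
          c ≤ ‖deriv f (f^[k] z)‖ ∧
          ‖deriv f (f^[k] z)‖ ≤ C)) := by
  refine ⟨1 / 100, by norm_num, fun f hfd hfb => ⟨fun z hz hre => ?_, fun j hj => ?_⟩⟩
  · exact four_mul_abs_re_lt_abs_re ((hfb z hz).trans_lt (by linarith))
  have hf : NearMulFive f := ⟨hfd, hfb⟩
  have hU : ∀ k < j, ∀ z ∈ branchDomain f j, f^[k] z ∈ innerStrip k := fun k hk z hz => hz.2 k hk
  refine ⟨branchDomain f j, fun z hz => innerStrip_subset_Sstrip 0 (hU 0 hj z hz),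
    hf.isOpen_branchDomain j, hf.isConnected_branchDomain j, hf.bijOn_branchDomain j, ?_,
    fun M => ?_, fun M => ?_, 4, 6, by norm_num,
    fun k hk z hz => hf.norm_deriv_mem_Icc (hU k hk z hz)⟩
  · rintro k hk _ ⟨z, hz, rfl⟩
    exact innerStrip_subset_Sstrip k (hU k hk z hz)
  · obtain ⟨z, hz, hre⟩ := hf.exists_mem_branchDomain_abs_re_sub_le j (M + 1 + j / 100)
    exact ⟨z, hz, by linarith [(abs_le.1 hre).1]⟩
  · obtain ⟨z, hz, hre⟩ := hf.exists_mem_branchDomain_abs_re_sub_le j (M - 1 - j / 100)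
    exact ⟨z, hz, by linarith [(abs_le.1 hre).2]⟩
end
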